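/- Assume that M normalizes both U and Ū and that the multiplication map Ū × M × U → G, (ū, m, u) ↦ ū m u, is injective. Let J ⊆ J̃ be decomposable subgroups of G with J ∩ Ū = J̃ ∩ Ū and J ∩ U = J̃ ∩ U. Let ζ ∈ M satisfy ζ(J ∩ M)ζ⁻¹ = J ∩ M, ζ(J ∩ U)ζ⁻¹ ⊆ J ∩ U, and ζ⁻¹(J ∩ Ū)ζ ⊆ J ∩ Ū. Then (J ζ J ζ⁻¹ J) ∩ (J̃ M J̃) = J = (J ζ⁻¹ J ζ J) ∩ (J̃ M J̃), where J ζ J ζ⁻¹ J := {j₁ ζ j₂ ζ⁻¹ j₃ : j₁, j₂, j₃ ∈ J} and J̃ M J̃ := {ĵ₁ m ĵ₂ : ĵ₁, ĵ₂ ∈ J̃, m ∈ M}. -/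
import Mathlib


open Pointwise

/-- A subgroup `J` of `G` is decomposable with respect to `(Ū, M, U)` if
`J = (J ∩ Ū)(J ∩ M)(J ∩ U)` as a setwise product. -/
def Decomposable {G : Type*} [Group G] (Ubar M U : Subgroup G) (J : Subgroup G) : Prop :=
  (J : Set G) =
    ((J : Set G) ∩ (Ubar : Set G)) * ((J : Set G) ∩ (M : Set G)) * ((J : Set G) ∩ (U : Set G))

/-- Support lemma: with `M` normalizing `U` and `Ū` and the multiplication
`Ū × M × U → G` injective, for nested decomposable subgroups `J ⊆ J̃` with the same upper and
lower parts and a strongly positive element `ζ ∈ M`,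
`(J ζ J ζ⁻¹ J) ∩ (J̃ M J̃) = J = (J ζ⁻¹ J ζ J) ∩ (J̃ M J̃)`. -/
theorem support_lemma {G : Type*} [Group G] (Ubar M U : Subgroup G)
    (hMU : ∀ m ∈ M, ∀ u ∈ U, m * u * m⁻¹ ∈ U)
    (hMUbar : ∀ m ∈ M, ∀ u ∈ Ubar, m * u * m⁻¹ ∈ Ubar)
    (hinj : Function.Injective fun t : Ubar × M × U => (t.1 : G) * (t.2.1 : G) * (t.2.2 : G))
    (J Jt : Subgroup G) (hle : J ≤ Jt)
    (hJ : Decomposable Ubar M U J) (hJt : Decomposable Ubar M U Jt)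
    (hUbar : J ⊓ Ubar = Jt ⊓ Ubar) (hU : J ⊓ U = Jt ⊓ U)
    (ζ : G) (hζM : ζ ∈ M)
    (hζJM : (fun x => ζ * x * ζ⁻¹) '' ((J ⊓ M : Subgroup G) : Set G)
              = ((J ⊓ M : Subgroup G) : Set G))
    (hζJU : ∀ x ∈ J ⊓ U, ζ * x * ζ⁻¹ ∈ J ⊓ U)
    (hζJUbar : ∀ x ∈ J ⊓ Ubar, ζ⁻¹ * x * ζ ∈ J ⊓ Ubar) :
    ((J : Set G) * {ζ} * (J : Set G) * {ζ⁻¹} * (J : Set G))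
        ∩ ((Jt : Set G) * (M : Set G) * (Jt : Set G)) = (J : Set G)
      ∧ ((J : Set G) * {ζ⁻¹} * (J : Set G) * {ζ} * (J : Set G))
          ∩ ((Jt : Set G) * (M : Set G) * (Jt : Set G)) = (J : Set G) := by
  -- uniqueness of Ū-M-U decompositions
  have uniq : ∀ ub₁ ∈ Ubar, ∀ m₁ ∈ M, ∀ u₁ ∈ U, ∀ ub₂ ∈ Ubar, ∀ m₂ ∈ M, ∀ u₂ ∈ U,
      ub₁ * m₁ * u₁ = ub₂ * m₂ * u₂ → ub₁ = ub₂ ∧ m₁ = m₂ ∧ u₁ = u₂ := by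
    intro ub₁ h1 m₁ h2 u₁ h3 ub₂ h4 m₂ h5 u₂ h6 heq
    have h := hinj (a₁ := ⟨⟨ub₁, h1⟩, ⟨m₁, h2⟩, ⟨u₁, h3⟩⟩)
      (a₂ := ⟨⟨ub₂, h4⟩, ⟨m₂, h5⟩, ⟨u₂, h6⟩⟩) heq
    rw [Prod.ext_iff, Prod.ext_iff, Subtype.ext_iff, Subtype.ext_iff, Subtype.ext_iff] at h
    exact ⟨h.1, h.2.1, h.2.2⟩
  -- forward decomposition for a decomposable subgroup
  have decompOf : ∀ (K : Subgroup G), Decomposable Ubar M U K → ∀ j ∈ K,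
      ∃ ub ∈ K ⊓ Ubar, ∃ b ∈ K ⊓ M, ∃ u ∈ K ⊓ U, j = ub * b * u := by
    intro K hK j hj
    have hj' : j ∈ ((K : Set G) ∩ Ubar) * ((K : Set G) ∩ M) * ((K : Set G) ∩ U) := by
      rw [← hK]; exact hj
    obtain ⟨y, hy, u, hu, h1⟩ := hj'
    obtain ⟨ub, hub, b, hb, h2⟩ := hy
    exact ⟨ub, Subgroup.mem_inf.mpr hub, b, Subgroup.mem_inf.mpr hb, u, Subgroup.mem_inf.mpr hu,
      by rw [← h1, ← h2]⟩
  -- reverse-order decomposition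
  have decompOf' : ∀ (K : Subgroup G), Decomposable Ubar M U K → ∀ j ∈ K,
      ∃ u ∈ K ⊓ U, ∃ b ∈ K ⊓ M, ∃ ub ∈ K ⊓ Ubar, j = u * b * ub := by
    intro K hK j hj
    obtain ⟨ub, hub, b, hb, u, hu, h⟩ := decompOf K hK j⁻¹ (inv_mem hj)
    refine ⟨u⁻¹, inv_mem hu, b⁻¹, inv_mem hb, ub⁻¹, inv_mem hub, ?_⟩
    rw [← inv_inv j, h]; group
  -- elements of Ū lying in J̃MJ̃ are in J̃
  have claimA : ∀ v ∈ Ubar, v ∈ (Jt : Set G) * (M : Set G) * (Jt : Set G) → v ∈ Jt := by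
    intro v hv hmem
    obtain ⟨y, hy, j2, hj2, hprod⟩ := hmem
    obtain ⟨j1, hj1, m, hm, h0⟩ := hy
    dsimp only at h0 hprod
    obtain ⟨ab, hab, a, ha, α, hα, h1⟩ := decompOf Jt hJt j1 hj1
    obtain ⟨β, hβ, b, hb, bb, hbb, h2⟩ := decompOf' Jt hJt j2 hj2
    have haM : a ∈ M := (Subgroup.mem_inf.mp ha).2
    have hbM : b ∈ M := (Subgroup.mem_inf.mp hb).2
    have hαU : α ∈ U := (Subgroup.mem_inf.mp hα).2
    have hβU : β ∈ U := (Subgroup.mem_inf.mp hβ).2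
    have habUbar : ab ∈ Ubar := (Subgroup.mem_inf.mp hab).2
    have hbbUbar : bb ∈ Ubar := (Subgroup.mem_inf.mp hbb).2
    set u' : G := a * (α * (m * β * m⁻¹)) * a⁻¹ with hu'def
    set n : G := a * m * b with hndef
    have hu'U : u' ∈ U := hMU a haM _ (mul_mem hαU (hMU m hm β hβU))
    have hnM : n ∈ M := mul_mem (mul_mem haM hm) hbM
    have hc : ab⁻¹ * v * bb⁻¹ = u' * n := by
      rw [← hprod, ← h0, h1, h2, hu'def, hndef]; group
    have hcUbar : ab⁻¹ * v * bb⁻¹ ∈ Ubar :=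
      mul_mem (mul_mem (inv_mem habUbar) hv) (inv_mem hbbUbar)
    have hu''U : n⁻¹ * u' * n ∈ U := by
      have := hMU n⁻¹ (inv_mem hnM) u' hu'U
      rwa [inv_inv] at this
    have hkey : (ab⁻¹ * v * bb⁻¹) * 1 * 1 = 1 * n * (n⁻¹ * u' * n) := by
      rw [hc]; group
    obtain ⟨he, -, -⟩ := uniq _ hcUbar 1 (one_mem M) 1 (one_mem U)
      1 (one_mem Ubar) n hnM _ hu''U hkey
    have hveq : v = ab * bb := by
      have : v = ab * (ab⁻¹ * v * bb⁻¹) * bb := by group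
      rw [this, he]; group
    rw [hveq]
    exact mul_mem (Subgroup.mem_inf.mp hab).1 (Subgroup.mem_inf.mp hbb).1
  -- elements of U lying in J̃MJ̃ are in J̃
  have claimA' : ∀ v ∈ U, v ∈ (Jt : Set G) * (M : Set G) * (Jt : Set G) → v ∈ Jt := by
    intro v hv hmem
    obtain ⟨y, hy, j2, hj2, hprod⟩ := hmem
    obtain ⟨j1, hj1, m, hm, h0⟩ := hy
    dsimp only at h0 hprod
    obtain ⟨α, hα, a, ha, ab, hab, h1⟩ := decompOf' Jt hJt j1 hj1
    obtain ⟨bb, hbb, b, hb, β, hβ, h2⟩ := decompOf Jt hJt j2 hj2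
    have haM : a ∈ M := (Subgroup.mem_inf.mp ha).2
    have hbM : b ∈ M := (Subgroup.mem_inf.mp hb).2
    have hαU : α ∈ U := (Subgroup.mem_inf.mp hα).2
    have hβU : β ∈ U := (Subgroup.mem_inf.mp hβ).2
    have habUbar : ab ∈ Ubar := (Subgroup.mem_inf.mp hab).2
    have hbbUbar : bb ∈ Ubar := (Subgroup.mem_inf.mp hbb).2
    set ub' : G := a * (ab * (m * bb * m⁻¹)) * a⁻¹ with hub'def
    set n : G := a * m * b with hndef
    have hub'Ubar : ub' ∈ Ubar := hMUbar a haM _ (mul_mem habUbar (hMUbar m hm bb hbbUbar))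
    have hnM : n ∈ M := mul_mem (mul_mem haM hm) hbM
    have hc : α⁻¹ * v * β⁻¹ = ub' * n := by
      rw [← hprod, ← h0, h1, h2, hub'def, hndef]; group
    have hcU : α⁻¹ * v * β⁻¹ ∈ U :=
      mul_mem (mul_mem (inv_mem hαU) hv) (inv_mem hβU)
    have hkey : (1 : G) * 1 * (α⁻¹ * v * β⁻¹) = ub' * n * 1 := by
      rw [hc]; group
    obtain ⟨-, -, he⟩ := uniq 1 (one_mem Ubar) 1 (one_mem M) _ hcU
      ub' hub'Ubar n hnM 1 (one_mem U) hkey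
    have hveq : v = α * β := by
      have : v = α * (α⁻¹ * v * β⁻¹) * β := by group
      rw [this, he]; group
    rw [hveq]
    exact mul_mem (Subgroup.mem_inf.mp hα).1 (Subgroup.mem_inf.mp hβ).1
  -- J is contained in J̃MJ̃
  have hJsub : ∀ x ∈ J, x ∈ (Jt : Set G) * (M : Set G) * (Jt : Set G) := by
    intro x hx
    have h : x * 1 * 1 ∈ (Jt : Set G) * (M : Set G) * (Jt : Set G) :=
      Set.mul_mem_mul (Set.mul_mem_mul (hle hx) (one_mem M)) (one_mem Jt)
    simpa using h
  -- conjugation facts for ζ on J ⊓ M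
  have hζJM₁ : ∀ b ∈ J ⊓ M, ζ * b * ζ⁻¹ ∈ J ⊓ M := by
    intro b hb
    have : ζ * b * ζ⁻¹ ∈ (fun x => ζ * x * ζ⁻¹) '' ((J ⊓ M : Subgroup G) : Set G) :=
      ⟨b, hb, rfl⟩
    rwa [hζJM] at this
  have hζJM₂ : ∀ b ∈ J ⊓ M, ζ⁻¹ * b * ζ ∈ J ⊓ M := by
    intro b hb
    have hb' : (b : G) ∈ (fun x => ζ * x * ζ⁻¹) '' ((J ⊓ M : Subgroup G) : Set G) := by
      rw [hζJM]; exact hb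
    obtain ⟨c, hc, hceq⟩ := hb'
    have : ζ⁻¹ * b * ζ = c := by rw [← hceq]; group
    rw [this]; exact hc
  constructor
  · ext x
    constructor
    · rintro ⟨hxL, hxR⟩
      obtain ⟨y4, hy4, j3, hj3, hx4⟩ := hxL
      obtain ⟨y3, hy3, z2, hz2, hx3⟩ := hy4
      obtain ⟨y2, hy2, j2, hj2, hx2⟩ := hy3
      obtain ⟨j1, hj1, z1, hz1, hx1⟩ := hy2
      rw [Set.mem_singleton_iff] at hz1 hz2
      rw [hz1] at hx1; rw [hz2] at hx3
      obtain ⟨ub, hub, b, hb, u, hu, hj2eq⟩ := decompOf J hJ j2 hj2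
      have hubUbar : ub ∈ Ubar := (Subgroup.mem_inf.mp hub).2
      have hvUbar : ζ * ub * ζ⁻¹ ∈ Ubar := hMUbar ζ hζM ub hubUbar
      have hbJ : ζ * b * ζ⁻¹ ∈ J := (Subgroup.mem_inf.mp (hζJM₁ b hb)).1
      have huJ : ζ * u * ζ⁻¹ ∈ J := (Subgroup.mem_inf.mp (hζJU u hu)).1
      have hjbigJ : (ζ * b * ζ⁻¹) * ((ζ * u * ζ⁻¹) * j3) ∈ J :=
        mul_mem hbJ (mul_mem huJ hj3)
      have hxv : x = j1 * (ζ * ub * ζ⁻¹) * ((ζ * b * ζ⁻¹) * ((ζ * u * ζ⁻¹) * j3)) := by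
        rw [← hx4, ← hx3, ← hx2, ← hx1, hj2eq]; group
      obtain ⟨y, hy, k2, hk2, hprod⟩ := hxR
      obtain ⟨k1, hk1, m, hm, h0⟩ := hy
      dsimp only at h0 hprod
      have hvmem : ζ * ub * ζ⁻¹ ∈ (Jt : Set G) * (M : Set G) * (Jt : Set G) := by
        refine ⟨(j1⁻¹ * k1) * m, ⟨j1⁻¹ * k1, mul_mem (inv_mem (hle hj1)) hk1, m, hm, rfl⟩,
          k2 * ((ζ * b * ζ⁻¹) * ((ζ * u * ζ⁻¹) * j3))⁻¹,
          mul_mem hk2 (inv_mem (hle hjbigJ)), ?_⟩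
        have hk : k1 * m * k2 = j1 * (ζ * ub * ζ⁻¹) * ((ζ * b * ζ⁻¹) * ((ζ * u * ζ⁻¹) * j3)) := by
          rw [← h0] at hprod; rw [hprod, ← hxv]
        calc (j1⁻¹ * k1) * m * (k2 * ((ζ * b * ζ⁻¹) * ((ζ * u * ζ⁻¹) * j3))⁻¹)
            = j1⁻¹ * (k1 * m * k2) * ((ζ * b * ζ⁻¹) * ((ζ * u * ζ⁻¹) * j3))⁻¹ := by group
          _ = ζ * ub * ζ⁻¹ := by rw [hk]; group
      have hvJt : ζ * ub * ζ⁻¹ ∈ Jt := claimA _ hvUbar hvmem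
      have hvJ : ζ * ub * ζ⁻¹ ∈ J := by
        have : ζ * ub * ζ⁻¹ ∈ Jt ⊓ Ubar := Subgroup.mem_inf.mpr ⟨hvJt, hvUbar⟩
        rw [← hUbar] at this
        exact (Subgroup.mem_inf.mp this).1
      rw [hxv]
      exact mul_mem (mul_mem hj1 hvJ) hjbigJ
    · intro hx
      refine ⟨?_, hJsub x hx⟩
      have h : x * ζ * 1 * ζ⁻¹ * 1 ∈
          (J : Set G) * {ζ} * (J : Set G) * {ζ⁻¹} * (J : Set G) :=
        Set.mul_mem_mul (Set.mul_mem_mul (Set.mul_mem_mul (Set.mul_mem_mul hx rfl)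
          (one_mem J)) rfl) (one_mem J)
      simpa using h
  · ext x
    constructor
    · rintro ⟨hxL, hxR⟩
      obtain ⟨y4, hy4, j3, hj3, hx4⟩ := hxL
      obtain ⟨y3, hy3, z2, hz2, hx3⟩ := hy4
      obtain ⟨y2, hy2, j2, hj2, hx2⟩ := hy3
      obtain ⟨j1, hj1, z1, hz1, hx1⟩ := hy2
      rw [Set.mem_singleton_iff] at hz1 hz2
      rw [hz1] at hx1; rw [hz2] at hx3
      obtain ⟨u, hu, b, hb, ub, hub, hj2eq⟩ := decompOf' J hJ j2 hj2
      have huU : u ∈ U := (Subgroup.mem_inf.mp hu).2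
      have hvU : ζ⁻¹ * u * ζ ∈ U := by
        have := hMU ζ⁻¹ (inv_mem hζM) u huU
        rwa [inv_inv] at this
      have hbJ : ζ⁻¹ * b * ζ ∈ J := (Subgroup.mem_inf.mp (hζJM₂ b hb)).1
      have hubJ : ζ⁻¹ * ub * ζ ∈ J := (Subgroup.mem_inf.mp (hζJUbar ub hub)).1
      have hjbigJ : (ζ⁻¹ * b * ζ) * ((ζ⁻¹ * ub * ζ) * j3) ∈ J :=
        mul_mem hbJ (mul_mem hubJ hj3)
      have hxv : x = j1 * (ζ⁻¹ * u * ζ) * ((ζ⁻¹ * b * ζ) * ((ζ⁻¹ * ub * ζ) * j3)) := by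
        rw [← hx4, ← hx3, ← hx2, ← hx1, hj2eq]; group
      obtain ⟨y, hy, k2, hk2, hprod⟩ := hxR
      obtain ⟨k1, hk1, m, hm, h0⟩ := hy
      dsimp only at h0 hprod
      have hvmem : ζ⁻¹ * u * ζ ∈ (Jt : Set G) * (M : Set G) * (Jt : Set G) := by
        refine ⟨(j1⁻¹ * k1) * m, ⟨j1⁻¹ * k1, mul_mem (inv_mem (hle hj1)) hk1, m, hm, rfl⟩,
          k2 * ((ζ⁻¹ * b * ζ) * ((ζ⁻¹ * ub * ζ) * j3))⁻¹,
          mul_mem hk2 (inv_mem (hle hjbigJ)), ?_⟩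
        have hk : k1 * m * k2 = j1 * (ζ⁻¹ * u * ζ) * ((ζ⁻¹ * b * ζ) * ((ζ⁻¹ * ub * ζ) * j3)) := by
          rw [← h0] at hprod; rw [hprod, ← hxv]
        calc (j1⁻¹ * k1) * m * (k2 * ((ζ⁻¹ * b * ζ) * ((ζ⁻¹ * ub * ζ) * j3))⁻¹)
            = j1⁻¹ * (k1 * m * k2) * ((ζ⁻¹ * b * ζ) * ((ζ⁻¹ * ub * ζ) * j3))⁻¹ := by group
          _ = ζ⁻¹ * u * ζ := by rw [hk]; group
      have hvJt : ζ⁻¹ * u * ζ ∈ Jt := claimA' _ hvU hvmem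
      have hvJ : ζ⁻¹ * u * ζ ∈ J := by
        have : ζ⁻¹ * u * ζ ∈ Jt ⊓ U := Subgroup.mem_inf.mpr ⟨hvJt, hvU⟩
        rw [← hU] at this
        exact (Subgroup.mem_inf.mp this).1
      rw [hxv]
      exact mul_mem (mul_mem hj1 hvJ) hjbigJ
    · intro hx
      refine ⟨?_, hJsub x hx⟩
      have h : x * ζ⁻¹ * 1 * ζ * 1 ∈
          (J : Set G) * {ζ⁻¹} * (J : Set G) * {ζ} * (J : Set G) :=
        Set.mul_mem_mul (Set.mul_mem_mul (Set.mul_mem_mul (Set.mul_mem_mul hx rfl)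
          (one_mem J)) rfl) (one_mem J)
      simpa using h
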